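/- arXiv:1611.04839 — 4 statements merged into one kernel-verified Lean document; each statement's English description precedes it below -/
import Mathlib

section
/- Let k be a field, V a k-vector space with dual V∨, and let (M_i V)_{i∈ℤ} and (M'_j V∨)_{j∈ℤ} be increasing ℤ-indexed filtrations of V and V∨ by subspaces. Suppose there exists j₀ ∈ ℤ such that M'_{j₀} V∨ = V∨ and M'_{j₀−1} V∨ ≠ V∨. Then for every i₀ ∈ ℤ one has M_{i₀} V = ⋂_f (id ⊗ f)(M_{i₀+j₀}(V ⊗ V∨)), where f ranges over all nonzero k-linear functionals f : V∨ → k. -/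
/-!
Contracting `p ⊗ q` against a functional `f` gives `f(q) • p`, and over a field the ideal `f(q)`
is `⊥` or `⊤`. For `f ≠ 0` the summand `M i₀ ⊗ M' j₀ = M i₀ ⊗ V∨` therefore contracts onto
`M i₀`. Conversely, a nonzero `f` vanishing on the proper subspace `M' (j₀ - 1)` kills every
summand `M i ⊗ M' j` with `j < j₀`, while the remaining ones have `i ≤ i₀` and contract into
`M i ≤ M i₀`.
-/

open TensorProduct

theorem TensorProduct.map_rid_comp_map_range_map_subtype {R V W : Type*} [CommSemiring R]
    [AddCommMonoid V] [Module R V] [AddCommMonoid W] [Module R W]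
    (p : Submodule R V) (q : Submodule R W) (f : W →ₗ[R] R) :
    (LinearMap.range (TensorProduct.map p.subtype q.subtype)).map
        ((TensorProduct.rid R V).toLinearMap ∘ₗ TensorProduct.map LinearMap.id f) =
      q.map f • p := by
  apply le_antisymm
  · rw [range_map_eq_span_tmul, Submodule.map_span_le]
    rintro _ ⟨v, w, rfl⟩
    simpa using Submodule.smul_mem_smul (Submodule.mem_map_of_mem w.2) v.2
  · rw [Submodule.smul_le]
    rintro _ ⟨w, hw, rfl⟩ v hv
    exact ⟨v ⊗ₜ w, ⟨⟨v, hv⟩ ⊗ₜ ⟨w, hw⟩, rfl⟩, by simp⟩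

/-- The recovery formula for an increasing filtration `M` of `V` from the convolution
filtration on `V ⊗ V∨`: if `j₀` is the minimal index where the filtration `M'` of the dual
reaches `V∨`, then `M i₀` is the intersection, over all nonzero functionals `f` on `V∨`, of
the images of `M_{i₀+j₀}(V ⊗ V∨)` under `id ⊗ f`. -/
theorem recovery_formula (k : Type*) [Field k] (V : Type*) [AddCommGroup V] [Module k V]
    (M : ℤ → Submodule k V) (M' : ℤ → Submodule k (Module.Dual k V))
    (hM : Monotone M) (hM' : Monotone M')
    (j₀ : ℤ) (hj₀ : M' j₀ = ⊤) (hj₀' : M' (j₀ - 1) ≠ ⊤) (i₀ : ℤ) :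
    M i₀ =
      ⨅ (f : Module.Dual k V →ₗ[k] k) (_ : f ≠ 0),
        Submodule.map
          ((TensorProduct.rid k V).toLinearMap ∘ₗ
            TensorProduct.map (LinearMap.id : V →ₗ[k] V) f)
          (⨆ (i : ℤ) (j : ℤ) (_ : i + j = i₀ + j₀),
            LinearMap.range (TensorProduct.map (M i).subtype (M' j).subtype)) := by
  simp only [Submodule.map_iSup, TensorProduct.map_rid_comp_map_range_map_subtype]
  apply le_antisymm
  · refine le_iInf₂ fun f hf => ?_
    have hf_top : (M' j₀).map f = ⊤ := by
      rw [hj₀, Submodule.map_top, Module.Dual.range_eq_top_of_ne_zero hf]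
    calc M i₀ = (M' j₀).map f • M i₀ := by rw [hf_top, Submodule.top_smul]
      _ ≤ _ := le_iSup₂_of_le i₀ j₀
          (le_iSup_of_le rfl le_rfl : _ ≤ ⨆ (_ : i₀ + j₀ = i₀ + j₀), _)
  · obtain ⟨f₀, hf₀, hf₀_vanish⟩ :=
      Submodule.exists_dual_map_eq_bot_of_lt_top hj₀'.lt_top inferInstance
    refine iInf₂_le_of_le f₀ hf₀ (iSup₂_le fun i j => iSup_le fun hij => ?_)
    rcases le_or_gt j (j₀ - 1) with hj | hj
    · calc (M' j).map f₀ • M i ≤ (M' (j₀ - 1)).map f₀ • M i :=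
            Submodule.smul_mono_left (Submodule.map_mono (hM' hj))
        _ = ⊥ := by rw [hf₀_vanish, Submodule.bot_smul]
        _ ≤ M i₀ := bot_le
    · exact Submodule.smul_le_right.trans (hM (by omega))
end

section
/- Let k be a field, V a k-vector space with dual V∨, and let (M_i V)_{i∈ℤ} and (M'_j V∨)_{j∈ℤ} be increasing ℤ-indexed filtrations of V and V∨ by subspaces. Suppose there exists j₀ ∈ ℤ such that M'_{j₀} V∨ = V∨ and M'_{j₀−1} V∨ ≠ V∨. Let g : V → V be a k-linear automorphism and let ǧ : V∨ → V∨ be the contragredient automorphism ǧ(f) = f ∘ g⁻¹. If the automorphism g ⊗ ǧ of V ⊗_k V∨ maps M_n(V ⊗ V∨) onto M_n(V ⊗ V∨) for every n ∈ ℤ (where M_•(V ⊗ V∨) is the convolution filtration), then g(M_i V) = M_i V for every i ∈ ℤ. -/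
open TensorProduct

private lemma aux_tmul_zero (k : Type*) [Field k] (A B : Type*) [AddCommGroup A] [Module k A]
    [AddCommGroup B] [Module k B] (x : A) (y : B) (h : (x ⊗ₜ[k] y : A ⊗[k] B) = 0)
    (hy : y ≠ 0) : x = 0 := by
  obtain ⟨ℓ, hℓ⟩ : ∃ ℓ : Module.Dual k B, ℓ y ≠ 0 := by
    by_contra hc
    push_neg at hc
    exact hy ((Module.forall_dual_apply_eq_zero_iff k y).mp hc)
  have := congrArg ((TensorProduct.rid k A).toLinearMap.comp (LinearMap.lTensor A ℓ)) h
  simp only [LinearMap.comp_apply, LinearMap.lTensor_tmul, map_zero,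
    LinearEquiv.coe_coe, TensorProduct.rid_tmul] at this
  rcases smul_eq_zero.mp this with h' | h'
  · exact absurd h' hℓ
  · exact h'

private lemma aux_preserve (k : Type*) [Field k] (V : Type*) [AddCommGroup V]
    [Module k V]
    (M : ℤ → Submodule k V) (M' : ℤ → Submodule k (Module.Dual k V))
    (hM : Monotone M) (hM' : Monotone M')
    (j₀ : ℤ) (hj₀ : M' j₀ = ⊤) (hj₀' : M' (j₀ - 1) ≠ ⊤)
    (g : V ≃ₗ[k] V)
    (hg : ∀ n : ℤ,
      Submodule.map (TensorProduct.map g.toLinearMap g.symm.toLinearMap.dualMap)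
        (⨆ (i : ℤ) (j : ℤ) (_ : i + j = n),
          LinearMap.range (TensorProduct.map (M i).subtype (M' j).subtype)) ≤
      ⨆ (i : ℤ) (j : ℤ) (_ : i + j = n),
        LinearMap.range (TensorProduct.map (M i).subtype (M' j).subtype)) :
    ∀ i : ℤ, Submodule.map g.toLinearMap (M i) ≤ M i := by
  intro i
  rintro _ ⟨v, hv, rfl⟩
  obtain ⟨ψ, hψ⟩ : ∃ ψ, ψ ∉ M' (j₀ - 1) := by
    by_contra h
    push_neg at h
    exact hj₀' (Submodule.eq_top_iff'.mpr h)
  set φ : Module.Dual k V := g.toLinearMap.dualMap ψ with hφ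
  have hφψ : g.symm.toLinearMap.dualMap φ = ψ := by
    ext x
    simp [hφ]
  have hφmem : φ ∈ M' j₀ := by rw [hj₀]; trivial
  have h1 : (v ⊗ₜ[k] φ : V ⊗[k] Module.Dual k V) ∈
      (⨆ (a : ℤ) (b : ℤ) (_ : a + b = i + j₀),
        LinearMap.range (TensorProduct.map (M a).subtype (M' b).subtype)) := by
    apply Submodule.mem_iSup_of_mem i
    apply Submodule.mem_iSup_of_mem j₀
    apply Submodule.mem_iSup_of_mem rfl
    exact ⟨(⟨v, hv⟩ : M i) ⊗ₜ (⟨φ, hφmem⟩ : M' j₀), rfl⟩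
  have h2 : ((g v) ⊗ₜ[k] ψ : V ⊗[k] Module.Dual k V) ∈
      (⨆ (a : ℤ) (b : ℤ) (_ : a + b = i + j₀),
        LinearMap.range (TensorProduct.map (M a).subtype (M' b).subtype)) := by
    have := hg (i + j₀) (Submodule.mem_map_of_mem (f :=
      TensorProduct.map g.toLinearMap g.symm.toLinearMap.dualMap) h1)
    rwa [TensorProduct.map_tmul, hφψ] at this
  set Q : V ⊗[k] Module.Dual k V →ₗ[k] (V ⧸ M i) ⊗[k] (Module.Dual k V ⧸ M' (j₀ - 1)) :=
    TensorProduct.map (M i).mkQ (M' (j₀ - 1)).mkQ with hQdef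
  have hker : (⨆ (a : ℤ) (b : ℤ) (_ : a + b = i + j₀),
      LinearMap.range (TensorProduct.map (M a).subtype (M' b).subtype)) ≤
      LinearMap.ker Q := by
    refine iSup_le fun a => iSup_le fun b => iSup_le fun hab => ?_
    rw [LinearMap.range_le_ker_iff]
    apply TensorProduct.ext'
    intro x y
    rcases le_or_gt b (j₀ - 1) with hb | hb
    · have hy : (M' (j₀ - 1)).mkQ y = 0 :=
        (Submodule.Quotient.mk_eq_zero _).mpr (hM' hb y.2)
      simp [hQdef, hy]
    · have ha : a ≤ i := by omega
      have hx : (M i).mkQ x = 0 :=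
        (Submodule.Quotient.mk_eq_zero _).mpr (hM ha x.2)
      simp [hQdef, hx]
  have hQ0 : Q ((g v) ⊗ₜ[k] ψ) = 0 := hker h2
  rw [hQdef, TensorProduct.map_tmul] at hQ0
  have hψ0 : (M' (j₀ - 1)).mkQ ψ ≠ 0 := by
    simpa [Submodule.Quotient.mk_eq_zero] using hψ
  have := aux_tmul_zero k _ _ _ _ hQ0 hψ0
  simpa [Submodule.Quotient.mk_eq_zero] using this

/-- If an automorphism `g` of `V` is such that `g ⊗ ǧ` (with `ǧ` the contragredient
automorphism of the dual) preserves each step of the convolution filtration on `V ⊗ V∨`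
obtained from increasing filtrations `M` of `V` and `M'` of `V∨`, where `M'` reaches `V∨`
exactly at some index `j₀`, then `g` preserves each step of the filtration `M`. -/
theorem aut_preserves_filtration (k : Type*) [Field k] (V : Type*) [AddCommGroup V]
    [Module k V]
    (M : ℤ → Submodule k V) (M' : ℤ → Submodule k (Module.Dual k V))
    (hM : Monotone M) (hM' : Monotone M')
    (j₀ : ℤ) (hj₀ : M' j₀ = ⊤) (hj₀' : M' (j₀ - 1) ≠ ⊤)
    (g : V ≃ₗ[k] V)
    (hg : ∀ n : ℤ,
      Submodule.map (TensorProduct.map g.toLinearMap g.symm.toLinearMap.dualMap)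
        (⨆ (i : ℤ) (j : ℤ) (_ : i + j = n),
          LinearMap.range (TensorProduct.map (M i).subtype (M' j).subtype)) =
      ⨆ (i : ℤ) (j : ℤ) (_ : i + j = n),
        LinearMap.range (TensorProduct.map (M i).subtype (M' j).subtype)) :
    ∀ i : ℤ, Submodule.map g.toLinearMap (M i) = M i := by
  have hcomp : (TensorProduct.map g.symm.toLinearMap g.toLinearMap.dualMap).comp
      (TensorProduct.map g.toLinearMap g.symm.toLinearMap.dualMap) = LinearMap.id := by
    apply TensorProduct.ext'
    intro x y
    rw [LinearMap.comp_apply, TensorProduct.map_tmul, TensorProduct.map_tmul,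
      LinearMap.id_apply]
    congr 1
    · simp
    · ext z
      simp
  have hginv : ∀ n : ℤ,
      Submodule.map (TensorProduct.map g.symm.toLinearMap g.symm.symm.toLinearMap.dualMap)
        (⨆ (i : ℤ) (j : ℤ) (_ : i + j = n),
          LinearMap.range (TensorProduct.map (M i).subtype (M' j).subtype)) ≤
      ⨆ (i : ℤ) (j : ℤ) (_ : i + j = n),
        LinearMap.range (TensorProduct.map (M i).subtype (M' j).subtype) := by
    intro n
    simp only [LinearEquiv.symm_symm]
    conv_lhs => rw [← hg n]
    rw [← Submodule.map_comp, hcomp, Submodule.map_id]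
  have h1 := aux_preserve k V M M' hM hM' j₀ hj₀ hj₀' g (fun n => le_of_eq (hg n))
  have h2 := aux_preserve k V M M' hM hM' j₀ hj₀ hj₀' g.symm hginv
  intro i
  refine le_antisymm (h1 i) ?_
  intro x hx
  have : g.symm x ∈ M i := h2 i ⟨x, hx, rfl⟩
  exact ⟨g.symm x, this, by simp⟩
end

section
/- Let f : X → Y be a continuous open map of topological spaces and let L ⊆ X be a locally closed subset satisfying f⁻¹(f(L)) = L. Then f(L) is a locally closed subset of Y. -/
/-!
Locally closed means having an open coborder `(closure s \ s)ᶜ`. Since `f` is open, the preimage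
of a closure lies in the closure of the preimage, so for saturated `L` the map `f` sends the
coborder of `L` into that of `f '' L`; hence the coborder of `f '' L` is the union of the open sets
`f '' coborder L` and `(closure (f '' L))ᶜ`.
-/

open Set

section

variable {X Y : Type*} [TopologicalSpace X] [TopologicalSpace Y] {f : X → Y} {s : Set X}

lemma IsOpenMap.image_coborder_subset (hf : IsOpenMap f) (hs : f ⁻¹' (f '' s) = s) :
    f '' coborder s ⊆ coborder (f '' s) := by
  rw [image_subset_iff]
  simpa only [hs] using hf.coborder_preimage_subset (f '' s)

lemma IsOpenMap.coborder_image_eq (hf : IsOpenMap f) (hs : f ⁻¹' (f '' s) = s) :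
    coborder (f '' s) = f '' coborder s ∪ (closure (f '' s))ᶜ := by
  refine subset_antisymm ?_ (union_subset (hf.image_coborder_subset hs) ?_)
  · rw [coborder_eq_union_closure_compl]
    exact union_subset_union_left _ (image_mono subset_coborder)
  · rw [coborder_eq_union_closure_compl]
    exact subset_union_right

end

theorem image_locallyClosed_of_saturated_general {X Y : Type*} [TopologicalSpace X]
    [TopologicalSpace Y] (f : X → Y) (hopen : IsOpenMap f)
    (L : Set X) (hL : IsLocallyClosed L) (hsat : f ⁻¹' (f '' L) = L) :
    IsLocallyClosed (f '' L) := by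
  rw [isLocallyClosed_iff_isOpen_coborder] at hL ⊢
  rw [hopen.coborder_image_eq hsat]
  exact (hopen _ hL).union isClosed_closure.isOpen_compl

/-- If `f : X → Y` is a continuous open map and `L ⊆ X` is a locally closed subset with
`f ⁻¹ (f(L)) = L`, then `f(L)` is locally closed in `Y`. -/
theorem image_locallyClosed_of_saturated {X Y : Type*} [TopologicalSpace X]
    [TopologicalSpace Y] (f : X → Y) (hcont : Continuous f) (hopen : IsOpenMap f)
    (L : Set X) (hL : IsLocallyClosed L) (hsat : f ⁻¹' (f '' L) = L) :
    IsLocallyClosed (f '' L) :=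
  image_locallyClosed_of_saturated_general f hopen L hL hsat
end

section
/- Let X and Y be spectral spaces and f : X → Y a continuous open map such that the preimage under f of every quasi-compact open subset of Y is quasi-compact, and such that for every y ∈ Y the fiber f⁻¹(y) is a finite and discrete subspace of X. Then for every constructible subset L of X, the image f(L) is a constructible subset of Y. -/
/-
Constructible sets are clopen in the constructible topology of `X`, which is quasi-compact because
`X` is spectral. Given `x ∈ L`, pick a quasi-compact open `W ∋ x` meeting the fibre over `f x` only
in `x`. Since constructible sets separate the points of `Y`, the preimages `f⁻¹ C` of the
constructible sets `C ∋ f x` intersect in a set meeting `W` only in `x ∈ L`; by compactness finitely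
many of them already give `f⁻¹ C ∩ W ⊆ L`, so `f W ∩ C` is a constructible set containing `f x`
inside `f L`. Compactness of `L` then covers it by the preimages of finitely many such sets.
-/

/-- A subset of a topological space is constructible if it belongs to the Boolean algebra
of subsets generated by the retrocompact open sets. -/
inductive IsCons {X : Type*} [TopologicalSpace X] : Set X → Prop
  | retroOpen (U : Set X) (hU : IsOpen U)
      (hretro : ∀ V : Set X, IsOpen V → IsCompact V → IsCompact (U ∩ V)) : IsCons U
  | compl (s : Set X) : IsCons s → IsCons sᶜ
  | union (s t : Set X) : IsCons s → IsCons t → IsCons (s ∪ t)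

open Set Topology TopologicalSpace

section

variable {X Y : Type*} [TopologicalSpace X] [TopologicalSpace Y]

lemma isCons_iff_isConstructible {s : Set X} : IsCons s ↔ IsConstructible s := by
  refine ⟨fun hs ↦ ?_, fun hs ↦ ?_⟩
  · induction hs with
    | retroOpen U hU hretro =>
      exact IsRetrocompact.isConstructible hU fun V hV hVo ↦ hretro V hVo hV
    | compl s _ ih => exact ih.compl
    | union s t _ _ ihs iht => exact ihs.union iht
  · induction hs using IsConstructible.empty_union_induction with
    | open_retrocompact U hU hretro => exact .retroOpen U hU fun V hVo hV ↦ hretro hV hVo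
    | union s _ t _ ihs iht => exact .union s t ihs iht
    | compl s _ ih => exact .compl s ih

lemma Topology.IsConstructible.isClopen_withConstructibleTopology [CompactSpace X] {s : Set X}
    (hs : IsConstructible s) :
    IsClopen (WithTopology.ofTopology ⁻¹' s : Set (WithConstructibleTopology X)) := by
  induction hs using IsConstructible.empty_union_induction with
  | open_retrocompact U hU hretro =>
    refine ⟨isOpen_compl_iff.mp ?_, hretro.isCompact.isOpen_constructibleTopology_of_isOpen hU⟩
    exact IsCompact.isOpen_constructibleTopology_of_isClosed (s := Uᶜ)
      (by rw [compl_compl]; exact hretro.isCompact) hU.isClosed_compl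
  | union s _ t _ ihs iht => exact ihs.union iht
  | compl s _ ih => exact ih.compl

lemma Topology.IsConstructible.exists_finite_subcover [CompactSpace X] [QuasiSober X]
    [PrespectralSpace X] [QuasiSeparatedSpace X] {ι : Type*} {L : Set X} (hL : IsConstructible L)
    {U : ι → Set X} (hU : ∀ i, IsConstructible (U i)) (hLU : L ⊆ ⋃ i, U i) :
    ∃ t : Finset ι, L ⊆ ⋃ i ∈ t, U i := by
  obtain ⟨t, ht⟩ := hL.isClopen_withConstructibleTopology.isClosed.isCompact.elim_finite_subcover
    _ (fun i ↦ (hU i).isClopen_withConstructibleTopology.isOpen)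
    (by rw [← preimage_iUnion]; exact preimage_mono hLU)
  refine ⟨t, fun x hx ↦ ?_⟩
  simpa [WithTopology.ofTopology_toTopology] using ht (a := WithTopology.toTopology _ x) hx

lemma IsRetrocompact.preimage_of_isOpenMap [QuasiSeparatedSpace X] {f : X → Y}
    (hf : IsSpectralMap f) (hfo : IsOpenMap f) {s : Set Y} (hs : IsRetrocompact s)
    (hso : IsOpen s) : IsRetrocompact (f ⁻¹' s) := by
  intro V hV hVo
  have hsfV : IsOpen (s ∩ f '' V) := hso.inter (hfo V hVo)
  have hsfV' : IsCompact (s ∩ f '' V) := hs (hV.image hf.continuous) (hfo V hVo)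
  have : f ⁻¹' (s ∩ f '' V) ∩ V = f ⁻¹' s ∩ V := by
    rw [preimage_inter, inter_assoc, inter_eq_right.mpr (subset_preimage_image f V)]
  rw [← this]
  exact (hf.isCompact_preimage_of_isOpen hsfV hsfV').inter_of_isOpen hV
    (hsfV.preimage hf.continuous) hVo

lemma Topology.IsConstructible.preimage_of_isOpenMap [QuasiSeparatedSpace X] {f : X → Y}
    (hf : IsSpectralMap f) (hfo : IsOpenMap f) {s : Set Y} (hs : IsConstructible s) :
    IsConstructible (f ⁻¹' s) :=
  hs.preimage hf.continuous fun _ hUo hU ↦ hU.preimage_of_isOpenMap hf hfo hUo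

lemma eq_of_forall_isConstructible_mem [T0Space Y] [PrespectralSpace Y] [QuasiSeparatedSpace Y]
    {y y' : Y} (h : ∀ C : Set Y, IsConstructible C → y ∈ C → y' ∈ C) : y = y' := by
  refine (inseparable_iff_forall_isOpen.mpr fun s hs ↦ ⟨fun hys ↦ ?_, fun hy's ↦ ?_⟩).eq
  · obtain ⟨U, ⟨hUo, hU⟩, hyU, hUs⟩ :=
      PrespectralSpace.isTopologicalBasis.exists_subset_of_mem_open hys hs
    exact hUs (h U (hU.isConstructible hUo) hyU)
  · obtain ⟨U, ⟨hUo, hU⟩, hy'U, hUs⟩ :=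
      PrespectralSpace.isTopologicalBasis.exists_subset_of_mem_open hy's hs
    by_contra hys
    exact h Uᶜ (hU.isConstructible hUo).compl (fun hyU ↦ hys (hUs hyU)) hy'U

lemma IsDiscrete.exists_isCompact_isOpen_inter_eq_singleton [PrespectralSpace X] {s : Set X}
    (hs : IsDiscrete s) {x : X} (hx : x ∈ s) :
    ∃ W : Set X, IsCompact W ∧ IsOpen W ∧ W ∩ s = {x} := by
  obtain ⟨O, hO, hOs⟩ := isOpen_inter_eq_singleton_of_mem_discrete hs hx
  obtain ⟨W, ⟨hWo, hW⟩, hxW, hWO⟩ := PrespectralSpace.isTopologicalBasis.exists_subset_of_mem_open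
    (hOs.ge (mem_singleton x)).1 hO
  refine ⟨W, hW, hWo, subset_antisymm ?_ (singleton_subset_iff.mpr ⟨hxW, hx⟩)⟩
  exact hOs ▸ inter_subset_inter_left s hWO

section Spectral

variable [CompactSpace X] [QuasiSober X] [PrespectralSpace X] [QuasiSeparatedSpace X]
  [T0Space Y] [PrespectralSpace Y] [QuasiSeparatedSpace Y] {f : X → Y}

lemma exists_isConstructible_mem_subset_image (hf : IsSpectralMap f) (hfo : IsOpenMap f)
    {L : Set X} (hL : IsConstructible L) {x : X} (hxL : x ∈ L) (hx : IsDiscrete (f ⁻¹' {f x})) :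
    ∃ C : Set Y, IsConstructible C ∧ f x ∈ C ∧ C ⊆ f '' L := by
  obtain ⟨W, hW, hWo, hWx⟩ := hx.exists_isCompact_isOpen_inter_eq_singleton rfl
  have hxW : x ∈ W := (hWx.ge (mem_singleton x)).1
  let 𝒞 := {C : Set Y // IsConstructible C ∧ f x ∈ C}
  have hcover : W \ L ⊆ ⋃ C : 𝒞, (f ⁻¹' C.1)ᶜ := by
    intro z ⟨hzW, hzL⟩
    by_contra hz
    simp only [mem_iUnion, mem_compl_iff, mem_preimage, not_exists, not_not] at hz
    have hfz : f x = f z := eq_of_forall_isConstructible_mem fun C hC hxC ↦ hz ⟨C, hC, hxC⟩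
    have : z ∈ W ∩ f ⁻¹' {f x} := ⟨hzW, hfz.symm⟩
    rw [hWx, mem_singleton_iff] at this
    exact hzL (this ▸ hxL)
  obtain ⟨t, ht⟩ := ((hW.isConstructible hWo).sdiff hL).exists_finite_subcover
    (fun C ↦ (C.2.1.preimage_of_isOpenMap hf hfo).compl) hcover
  refine ⟨f '' W ∩ ⋂ C ∈ t, C.1, ?_, ⟨⟨x, hxW, rfl⟩, ?_⟩, ?_⟩
  · exact ((hW.image hf.continuous).isConstructible (hfo W hWo)).inter
      (.biInter t.finite_toSet fun C _ ↦ C.2.1)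
  · exact mem_iInter₂.mpr fun C _ ↦ C.2.2
  · rintro _ ⟨⟨z, hzW, rfl⟩, hzC⟩
    refine ⟨z, ?_, rfl⟩
    by_contra hzL
    obtain ⟨C, hCt, hzC'⟩ := mem_iUnion₂.mp (ht ⟨hzW, hzL⟩)
    exact hzC' (mem_iInter₂.mp hzC C hCt)

theorem Topology.IsConstructible.image_of_isOpenMap (hf : IsSpectralMap f) (hfo : IsOpenMap f)
    (hfib : ∀ y, IsDiscrete (f ⁻¹' {y})) {L : Set X} (hL : IsConstructible L) :
    IsConstructible (f '' L) := by
  choose C hC hxC hCL using fun x : L ↦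
    exists_isConstructible_mem_subset_image hf hfo hL x.2 (hfib (f x))
  obtain ⟨t, ht⟩ := hL.exists_finite_subcover (fun x ↦ (hC x).preimage_of_isOpenMap hf hfo)
    fun x hx ↦ mem_iUnion.mpr ⟨⟨x, hx⟩, hxC ⟨x, hx⟩⟩
  have : f '' L = ⋃ x ∈ t, C x := by
    refine subset_antisymm ?_ (iUnion₂_subset fun x _ ↦ hCL x)
    rintro _ ⟨x, hx, rfl⟩
    simpa using ht hx
  rw [this]
  exact .biUnion t.finite_toSet fun x _ ↦ hC x

end Spectral

end

theorem image_constructible_general {X Y : Type*} [TopologicalSpace X] [TopologicalSpace Y]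
    [CompactSpace X] [QuasiSober X] [QuasiSeparatedSpace X]
    (hXbasis : TopologicalSpace.IsTopologicalBasis {U : Set X | IsOpen U ∧ IsCompact U})
    [T0Space Y] [QuasiSeparatedSpace Y]
    (hYbasis : TopologicalSpace.IsTopologicalBasis {U : Set Y | IsOpen U ∧ IsCompact U})
    (f : X → Y) (hcont : Continuous f) (hopen : IsOpenMap f)
    (hqc : ∀ V : Set Y, IsOpen V → IsCompact V → IsCompact (f ⁻¹' V))
    (hfib : ∀ y : Y, (f ⁻¹' {y}).Finite ∧ DiscreteTopology (f ⁻¹' {y}))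
    (L : Set X) (hL : IsCons L) :
    IsCons (f '' L) := by
  have : PrespectralSpace X := ⟨hXbasis⟩
  have : PrespectralSpace Y := ⟨hYbasis⟩
  have hf : IsSpectralMap f := ⟨hcont, fun V hVo hV ↦ hqc V hVo hV⟩
  rw [isCons_iff_isConstructible] at hL ⊢
  exact hL.image_of_isOpenMap hf hopen fun y ↦ ⟨(hfib y).2⟩

/-- Let `X`, `Y` be spectral spaces (quasi-compact, T0, sober, quasi-separated, with the
quasi-compact open sets forming a basis) and `f : X → Y` a continuous open map such that
preimages of quasi-compact open sets are quasi-compact and all fibers are finite discrete.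
Then images of constructible sets under `f` are constructible. -/
theorem image_constructible {X Y : Type*} [TopologicalSpace X] [TopologicalSpace Y]
    [CompactSpace X] [T0Space X] [QuasiSober X] [QuasiSeparatedSpace X]
    (hXbasis : TopologicalSpace.IsTopologicalBasis {U : Set X | IsOpen U ∧ IsCompact U})
    [CompactSpace Y] [T0Space Y] [QuasiSober Y] [QuasiSeparatedSpace Y]
    (hYbasis : TopologicalSpace.IsTopologicalBasis {U : Set Y | IsOpen U ∧ IsCompact U})
    (f : X → Y) (hcont : Continuous f) (hopen : IsOpenMap f)
    (hqc : ∀ V : Set Y, IsOpen V → IsCompact V → IsCompact (f ⁻¹' V))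
    (hfib : ∀ y : Y, (f ⁻¹' {y}).Finite ∧ DiscreteTopology (f ⁻¹' {y}))
    (L : Set X) (hL : IsCons L) :
    IsCons (f '' L) :=
  image_constructible_general hXbasis hYbasis f hcont hopen hqc hfib L hL
end
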